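/- arXiv:2111.04926 — 2 statements merged into one kernel-verified Lean document; each statement's English description precedes it below -/
import Mathlib

section
/- The function ψ(a, b) = a·Φ(−b) is strictly quasi-concave on (0, ∞) × ℝ; that is, for any distinct (a₀, b₀), (a₁, b₁) in (0, ∞) × ℝ and any λ ∈ (0,1), ψ(a₀ + λ(a₁−a₀), b₀ + λ(b₁−b₀)) > min{ψ(a₀, b₀), ψ(a₁, b₁)}. -/
/-- The density of the standard normal distribution. -/
noncomputable def stdGaussianPDF (x : ℝ) : ℝ :=
  (Real.sqrt (2 * Real.pi))⁻¹ * Real.exp (-(x ^ 2) / 2)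

/-- The cumulative distribution function of the standard normal distribution. -/
noncomputable def stdGaussianCDF (x : ℝ) : ℝ :=
  ∫ t in Set.Iic x, stdGaussianPDF t

/-!
On `(0, ∞) × ℝ`, `log ψ(a, b) = log a + log Φ(-b)` is a sum of strictly concave functions of
separate variables, hence strictly concave, and a strictly concave function exceeds the smaller
of its endpoint values on an open segment. Strict concavity of `log Φ` means that the hazard
`φ / Φ` is strictly decreasing; its derivative is `-φ (xΦ + φ) / Φ²`, and `xΦ(x) + φ(x) > 0`
because it equals `∫_{t ≤ x} (x - t) φ(t) dt ≥ 0` and is strictly increasing (its derivative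
is `Φ > 0`).
-/

open Real MeasureTheory Set Filter Topology

section StrictConcave

variable {𝕜 E F β : Type*} [Ring 𝕜] [PartialOrder 𝕜]
  [AddCommGroup E] [Module 𝕜 E] [AddCommGroup F] [Module 𝕜 F]
  [AddCommMonoid β] [PartialOrder β] [Module 𝕜 β]

theorem StrictConcaveOn.comp_neg {f : E → β} (hf : StrictConcaveOn 𝕜 univ f) :
    StrictConcaveOn 𝕜 univ (fun x => f (-x)) := by
  refine ⟨convex_univ, fun x _ y _ hxy a b ha hb hab => ?_⟩
  simpa only [smul_neg, neg_add] using
    hf.2 (mem_univ (-x)) (mem_univ (-y)) (neg_injective.ne hxy) ha hb hab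

theorem StrictConcaveOn.add_fst_snd [IsOrderedCancelAddMonoid β] {s : Set E} {t : Set F}
    {f : E → β} {g : F → β} (hf : StrictConcaveOn 𝕜 s f) (hg : StrictConcaveOn 𝕜 t g) :
    StrictConcaveOn 𝕜 (s ×ˢ t) (fun p => f p.1 + g p.2) := by
  refine ⟨hf.1.prod hg.1, fun p hp q hq hpq a b ha hb hab => ?_⟩
  have hsum : a • (f p.1 + g p.2) + b • (f q.1 + g q.2) =
      (a • f p.1 + b • f q.1) + (a • g p.2 + b • g q.2) := by
    simp only [smul_add]; abel
  rw [hsum]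
  by_cases h₁ : p.1 = q.1
  · have h₂ : p.2 ≠ q.2 := fun h₂ => hpq (Prod.ext h₁ h₂)
    exact add_lt_add_of_le_of_lt (hf.concaveOn.2 hp.1 hq.1 ha.le hb.le hab)
      (hg.2 hp.2 hq.2 h₂ ha hb hab)
  · exact add_lt_add_of_lt_of_le (hf.2 hp.1 hq.1 h₁ ha hb hab)
      (hg.concaveOn.2 hp.2 hq.2 ha.le hb.le hab)

end StrictConcave

section StdGaussian

local notation "φ" => stdGaussianPDF
local notation "Φ" => stdGaussianCDF

theorem stdGaussianPDF_pos (x : ℝ) : 0 < φ x := by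
  unfold stdGaussianPDF; positivity

theorem continuous_stdGaussianPDF : Continuous φ := by
  unfold stdGaussianPDF; fun_prop

theorem stdGaussianPDF_eq_mul_exp (x : ℝ) : φ x = (√(2 * π))⁻¹ * exp (-(1 / 2) * x ^ 2) := by
  unfold stdGaussianPDF; ring_nf

theorem integrable_stdGaussianPDF : Integrable φ :=
  ((integrable_exp_neg_mul_sq (b := 1 / 2) (by norm_num)).const_mul (√(2 * π))⁻¹).congr
    (.of_forall fun x => (stdGaussianPDF_eq_mul_exp x).symm)

theorem integrable_mul_stdGaussianPDF : Integrable (fun x => x * φ x) :=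
  ((integrable_mul_exp_neg_mul_sq (b := 1 / 2) (by norm_num)).const_mul (√(2 * π))⁻¹).congr
    (.of_forall fun x => by simp only [stdGaussianPDF_eq_mul_exp]; ring)

theorem hasDerivAt_stdGaussianPDF (x : ℝ) : HasDerivAt φ (-x * φ x) x := by
  refine ((((hasDerivAt_pow 2 x).neg).div_const 2).exp.const_mul (√(2 * π))⁻¹).congr_deriv ?_
  simp only [stdGaussianPDF, Pi.neg_apply]; push_cast; ring

theorem tendsto_stdGaussianPDF_atBot : Tendsto φ atBot (𝓝 0) := by
  have hsq : Tendsto (fun t : ℝ => t ^ 2) atBot atTop := by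
    simpa [Function.comp_def] using
      (tendsto_pow_atTop (α := ℝ) two_ne_zero).comp tendsto_neg_atBot_atTop
  have h : Tendsto (fun t : ℝ => -(t ^ 2) / 2) atBot atBot :=
    (tendsto_neg_atTop_atBot.comp hsq).atBot_div_const two_pos
  unfold stdGaussianPDF
  simpa only [mul_zero, Function.comp_def] using (tendsto_exp_atBot.comp h).const_mul (√(2 * π))⁻¹

theorem stdGaussianCDF_nonneg (x : ℝ) : 0 ≤ Φ x :=
  setIntegral_nonneg measurableSet_Iic fun t _ => (stdGaussianPDF_pos t).le

theorem stdGaussianCDF_eq_add_intervalIntegral (x : ℝ) : Φ x = Φ 0 + ∫ t in (0 : ℝ)..x, φ t := by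
  rw [← intervalIntegral.integral_Iic_sub_Iic integrable_stdGaussianPDF.integrableOn
    integrable_stdGaussianPDF.integrableOn, stdGaussianCDF, stdGaussianCDF]
  ring

theorem hasDerivAt_stdGaussianCDF (x : ℝ) : HasDerivAt Φ (φ x) x := by
  have h := (intervalIntegral.integral_hasDerivAt_right (a := 0) (b := x)
    integrable_stdGaussianPDF.intervalIntegrable
    continuous_stdGaussianPDF.stronglyMeasurable.stronglyMeasurableAtFilter
    continuous_stdGaussianPDF.continuousAt).const_add (Φ 0)
  rwa [← funext stdGaussianCDF_eq_add_intervalIntegral] at h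

theorem strictMono_stdGaussianCDF : StrictMono Φ :=
  strictMono_of_deriv_pos fun x => (hasDerivAt_stdGaussianCDF x).deriv ▸ stdGaussianPDF_pos x

theorem stdGaussianCDF_pos (x : ℝ) : 0 < Φ x :=
  (stdGaussianCDF_nonneg (x - 1)).trans_lt (strictMono_stdGaussianCDF (by linarith))

theorem integral_Iic_mul_stdGaussianPDF (x : ℝ) : ∫ t in Iic x, t * φ t = -φ x := by
  simpa using integral_Iic_of_hasDerivAt_of_tendsto' (f := fun t => -φ t) (a := x) (m := 0)
    (fun t _ => (hasDerivAt_stdGaussianPDF t).neg.congr_deriv (by ring))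
    integrable_mul_stdGaussianPDF.integrableOn (by simpa using tendsto_stdGaussianPDF_atBot.neg)

theorem mul_stdGaussianCDF_add_stdGaussianPDF_nonneg (x : ℝ) : 0 ≤ x * Φ x + φ x := by
  have h : ∫ t in Iic x, t * φ t ≤ ∫ t in Iic x, x * φ t :=
    setIntegral_mono_on integrable_mul_stdGaussianPDF.integrableOn
      (integrable_stdGaussianPDF.const_mul x).integrableOn measurableSet_Iic
      fun t ht => mul_le_mul_of_nonneg_right ht (stdGaussianPDF_pos t).le
  rw [integral_Iic_mul_stdGaussianPDF, integral_const_mul] at h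
  exact neg_le_iff_add_nonneg.mp h

theorem mul_stdGaussianCDF_add_stdGaussianPDF_pos (x : ℝ) : 0 < x * Φ x + φ x := by
  have hderiv (y : ℝ) : HasDerivAt (fun y => y * Φ y + φ y) (Φ y) y := by
    refine (((hasDerivAt_id' y).mul (hasDerivAt_stdGaussianCDF y)).add
      (hasDerivAt_stdGaussianPDF y)).congr_deriv ?_
    ring
  have hmono : StrictMono (fun y => y * Φ y + φ y) :=
    strictMono_of_deriv_pos fun y => (hderiv y).deriv ▸ stdGaussianCDF_pos y
  exact (mul_stdGaussianCDF_add_stdGaussianPDF_nonneg (x - 1)).trans_lt (hmono (by linarith))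

theorem strictAnti_stdGaussianPDF_div_stdGaussianCDF : StrictAnti (fun x => φ x / Φ x) := by
  refine strictAnti_of_deriv_neg fun x => ?_
  have hd : HasDerivAt (fun x => φ x / Φ x) _ x :=
    (hasDerivAt_stdGaussianPDF x).div (hasDerivAt_stdGaussianCDF x) (stdGaussianCDF_pos x).ne'
  rw [hd.deriv]
  have hnum := mul_pos (stdGaussianPDF_pos x) (mul_stdGaussianCDF_add_stdGaussianPDF_pos x)
  exact div_neg_of_neg_of_pos (by linarith) (pow_pos (stdGaussianCDF_pos x) 2)

theorem strictConcaveOn_log_stdGaussianCDF : StrictConcaveOn ℝ univ (fun x => log (Φ x)) := by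
  have h (x : ℝ) : HasDerivAt (fun x => log (Φ x)) (φ x / Φ x) x :=
    (hasDerivAt_stdGaussianCDF x).log (stdGaussianCDF_pos x).ne'
  refine StrictAnti.strictConcaveOn_univ_of_deriv
    (continuous_iff_continuousAt.mpr fun x => (h x).continuousAt) ?_
  rw [funext fun x => (h x).deriv]
  exact strictAnti_stdGaussianPDF_div_stdGaussianCDF

theorem strictConcaveOn_log_mul_stdGaussianCDF_neg :
    StrictConcaveOn ℝ (Ioi 0 ×ˢ univ) (fun p : ℝ × ℝ => log (p.1 * Φ (-p.2))) :=
  (strictConcaveOn_log_Ioi.add_fst_snd strictConcaveOn_log_stdGaussianCDF.comp_neg).congr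
    fun _ hp => (log_mul (mem_Ioi.mp hp.1).ne' (stdGaussianCDF_pos _).ne').symm

end StdGaussian

/-- The function `ψ(a, b) = a·Φ(−b)` is strictly quasi-concave on `(0, ∞) × ℝ`. -/
theorem strictQuasiConcave_aPhiNeg (a₀ a₁ b₀ b₁ lam : ℝ) (ha₀ : 0 < a₀) (ha₁ : 0 < a₁)
    (hne : (a₀, b₀) ≠ (a₁, b₁)) (hlam : lam ∈ Set.Ioo (0 : ℝ) 1) :
    min (a₀ * stdGaussianCDF (-b₀)) (a₁ * stdGaussianCDF (-b₁)) <
      (a₀ + lam * (a₁ - a₀)) * stdGaussianCDF (-(b₀ + lam * (b₁ - b₀))) := by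
  have hpos (a b : ℝ) (ha : 0 < a) : 0 < a * stdGaussianCDF (-b) :=
    mul_pos ha (stdGaussianCDF_pos _)
  have hmem₀ : (a₀, b₀) ∈ Ioi (0 : ℝ) ×ˢ (univ : Set ℝ) := ⟨ha₀, trivial⟩
  have hmem₁ : (a₁, b₁) ∈ Ioi (0 : ℝ) ×ˢ (univ : Set ℝ) := ⟨ha₁, trivial⟩
  have hseg :
      (a₀ + lam * (a₁ - a₀), b₀ + lam * (b₁ - b₀)) ∈ openSegment ℝ (a₀, b₀) (a₁, b₁) := by
    rw [openSegment_eq_image']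
    exact ⟨lam, hlam, by simp⟩
  have ha : 0 < a₀ + lam * (a₁ - a₀) :=
    ((convex_Ioi 0).prod convex_univ).openSegment_subset hmem₀ hmem₁ hseg |>.1
  have key := strictConcaveOn_log_mul_stdGaussianCDF_neg.lt_on_openSegment hmem₀ hmem₁ hne hseg
  rw [min_lt_iff] at key ⊢
  rwa [log_lt_log_iff (hpos _ _ ha₀) (hpos _ _ ha),
    log_lt_log_iff (hpos _ _ ha₁) (hpos _ _ ha)] at key
end

section
/- Let Θ ⊆ V be convex and centrosymmetric, L : V → ℝ and m : V → ℝⁿ linear, and suppose θ₀, θ₁ ∈ Θ both attain sup{L(θ) : ‖m(θ)‖ ≤ ε*, θ ∈ Θ} where ε* is the unique nonzero maximizer of ε ↦ ω(ε)Φ(−ε/σ) over [0, a*σ]. Then ‖m(θ₀)‖ = ‖m(θ₁)‖ = ε* and m(θ₀) = m(θ₁). -/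
/-- The modulus of continuity `ω(ε) = sup{L(θ) : ‖m(θ)‖ ≤ ε, θ ∈ Θ}`, as an
extended-real-valued function. -/
noncomputable def modulusE {V : Type*} [AddCommGroup V] [Module ℝ V] {n : ℕ}
    (L : V →ₗ[ℝ] ℝ) (m : V →ₗ[ℝ] EuclideanSpace ℝ (Fin n)) (Θ : Set V) (ε : ℝ) : EReal :=
  sSup ((fun θ => (L θ : EReal)) '' {θ ∈ Θ | ‖m θ‖ ≤ ε})


/-!
If `θ` attains `ω(ε*)`, then `ω` already equals `L θ ≥ 0` at `ε = ‖m θ‖ ≤ ε*`, while the weight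
`Φ(−ε/σ)` is at least as large there; so `‖m θ‖` is another maximizer of `ω(ε)Φ(−ε/σ)`, and
uniqueness forces `‖m θ‖ = ε*`. Since `L` is linear and `Θ` convex, the midpoint of two attainers
attains `ω(ε*)` too, hence `m` of it also has norm `ε*`; in the strictly convex Euclidean space
this forces `m θ₀ = m θ₁`.
-/

open MeasureTheory ProbabilityTheory

lemma stdGaussianPDF_eq_gaussianPDFReal : stdGaussianPDF = gaussianPDFReal 0 1 := by
  ext x
  simp [stdGaussianPDF, gaussianPDFReal, neg_div]

lemma monotone_stdGaussianCDF : Monotone stdGaussianCDF := by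
  intro x y hxy
  rw [stdGaussianCDF, stdGaussianCDF, stdGaussianPDF_eq_gaussianPDFReal]
  exact setIntegral_mono_set (integrable_gaussianPDFReal 0 1).integrableOn
    (ae_of_all _ fun t => gaussianPDFReal_nonneg 0 1 t)
    (Set.Iic_subset_Iic.mpr hxy).eventuallyLE

lemma antitone_stdGaussianCDF_neg_div {σ : ℝ} (hσ : 0 ≤ σ) :
    Antitone fun ε => stdGaussianCDF (-(ε / σ)) :=
  fun _ _ h => monotone_stdGaussianCDF (neg_le_neg (div_le_div_of_nonneg_right h hσ))

lemma Convex.zero_mem_of_neg_mem {V : Type*} [AddCommGroup V] [Module ℝ V] {Θ : Set V}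
    (hconv : Convex ℝ Θ) (hsym : ∀ θ ∈ Θ, -θ ∈ Θ) {θ : V} (hθ : θ ∈ Θ) : (0 : V) ∈ Θ := by
  simpa using hconv.midpoint_mem hθ (hsym θ hθ)

section Attainer

variable {V : Type*} [AddCommGroup V] [Module ℝ V] {n : ℕ} {L : V →ₗ[ℝ] ℝ}
  {m : V →ₗ[ℝ] EuclideanSpace ℝ (Fin n)} {Θ : Set V} {ε : ℝ} {θ : V}

structure IsModulusAttainer (L : V →ₗ[ℝ] ℝ) (m : V →ₗ[ℝ] EuclideanSpace ℝ (Fin n))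
    (Θ : Set V) (ε : ℝ) (θ : V) : Prop where
  mem : θ ∈ Θ
  norm_le : ‖m θ‖ ≤ ε
  le : ∀ θ' ∈ Θ, ‖m θ'‖ ≤ ε → L θ' ≤ L θ

namespace IsModulusAttainer

lemma modulusE_eq (h : IsModulusAttainer L m Θ ε θ) : modulusE L m Θ ε = L θ := by
  refine le_antisymm (sSup_le ?_) (le_sSup ⟨θ, ⟨h.mem, h.norm_le⟩, rfl⟩)
  rintro _ ⟨θ', ⟨hθ', hθ'ε⟩, rfl⟩
  exact EReal.coe_le_coe_iff.mpr (h.le θ' hθ' hθ'ε)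

lemma at_norm (h : IsModulusAttainer L m Θ ε θ) : IsModulusAttainer L m Θ ‖m θ‖ θ :=
  ⟨h.mem, le_rfl, fun θ' hθ' hθ'ε => h.le θ' hθ' (hθ'ε.trans h.norm_le)⟩

lemma nonneg (h : IsModulusAttainer L m Θ ε θ) (h0 : (0 : V) ∈ Θ) : 0 ≤ L θ := by
  simpa using h.le 0 h0 (by simpa using (norm_nonneg _).trans h.norm_le)

lemma half_add (hconv : Convex ℝ Θ) {θ₀ θ₁ : V} (h₀ : IsModulusAttainer L m Θ ε θ₀)
    (h₁ : IsModulusAttainer L m Θ ε θ₁) :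
    IsModulusAttainer L m Θ ε ((1 / 2 : ℝ) • (θ₀ + θ₁)) := by
  have hL : L θ₀ = L θ₁ := le_antisymm (h₁.le θ₀ h₀.mem h₀.norm_le) (h₀.le θ₁ h₁.mem h₁.norm_le)
  refine ⟨?_, ?_, fun θ' hθ' hθ'ε => ?_⟩
  · rw [smul_add]
    exact hconv h₀.mem h₁.mem (by norm_num) (by norm_num) (by norm_num)
  · rw [map_smul, map_add, norm_smul]
    calc ‖(1 / 2 : ℝ)‖ * ‖m θ₀ + m θ₁‖ ≤ 1 / 2 * (ε + ε) := by
          rw [Real.norm_of_nonneg (by norm_num)]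
          gcongr
          exact (norm_add_le _ _).trans (add_le_add h₀.norm_le h₁.norm_le)
      _ = ε := by ring
  · rw [map_smul, map_add, ← hL, smul_eq_mul]
    linarith [h₀.le θ' hθ' hθ'ε]

lemma norm_eq_of_isMaxOn {g : ℝ → ℝ} (hg : Antitone g) {b ε : ℝ}
    (hmax : IsMaxOn (fun ε => modulusE L m Θ ε * (g ε : EReal)) (Set.Icc 0 b) ε)
    (huniq : ∀ ε' ∈ Set.Icc 0 b,
      IsMaxOn (fun ε => modulusE L m Θ ε * (g ε : EReal)) (Set.Icc 0 b) ε' → ε' = ε)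
    (hb : ε ≤ b) (h0 : (0 : V) ∈ Θ) (h : IsModulusAttainer L m Θ ε θ) : ‖m θ‖ = ε := by
  refine huniq _ ⟨norm_nonneg _, h.norm_le.trans hb⟩ <| isMaxOn_iff.mpr fun ε' hε' =>
    (isMaxOn_iff.mp hmax ε' hε').trans ?_
  simp only [h.modulusE_eq, h.at_norm.modulusE_eq, ← EReal.coe_mul, EReal.coe_le_coe_iff]
  exact mul_le_mul_of_nonneg_left (hg h.norm_le) (h.nonneg h0)

end IsModulusAttainer

end Attainer

theorem modulus_maximizer_norm_and_m_unique_general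
    {V : Type*} [AddCommGroup V] [Module ℝ V] (n : ℕ) (σ astar εstar : ℝ) (hσ : 0 < σ)
    (L : V →ₗ[ℝ] ℝ) (m : V →ₗ[ℝ] EuclideanSpace ℝ (Fin n))
    (Θ : Set V) (hconv : Convex ℝ Θ) (hsym : ∀ θ ∈ Θ, -θ ∈ Θ)
    (hmem : εstar ∈ Set.Icc 0 (astar * σ))
    (hεmax : ∀ ε ∈ Set.Icc 0 (astar * σ),
      modulusE L m Θ ε * ((stdGaussianCDF (-(ε / σ)) : ℝ) : EReal) ≤
        modulusE L m Θ εstar * ((stdGaussianCDF (-(εstar / σ)) : ℝ) : EReal))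
    (hεuniq : ∀ ε ∈ Set.Icc 0 (astar * σ),
      (∀ ε' ∈ Set.Icc 0 (astar * σ),
        modulusE L m Θ ε' * ((stdGaussianCDF (-(ε' / σ)) : ℝ) : EReal) ≤
          modulusE L m Θ ε * ((stdGaussianCDF (-(ε / σ)) : ℝ) : EReal)) → ε = εstar)
    (θ₀ θ₁ : V) (hθ₀ : θ₀ ∈ Θ) (hθ₁ : θ₁ ∈ Θ)
    (hn₀ : ‖m θ₀‖ ≤ εstar) (hn₁ : ‖m θ₁‖ ≤ εstar)
    (hatt₀ : ∀ θ ∈ Θ, ‖m θ‖ ≤ εstar → L θ ≤ L θ₀)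
    (hatt₁ : ∀ θ ∈ Θ, ‖m θ‖ ≤ εstar → L θ ≤ L θ₁) :
    ‖m θ₀‖ = εstar ∧ ‖m θ₁‖ = εstar ∧ m θ₀ = m θ₁ := by
  have h₀ : IsModulusAttainer L m Θ εstar θ₀ := ⟨hθ₀, hn₀, hatt₀⟩
  have h₁ : IsModulusAttainer L m Θ εstar θ₁ := ⟨hθ₁, hn₁, hatt₁⟩
  have norm_eq : ∀ θ, IsModulusAttainer L m Θ εstar θ → ‖m θ‖ = εstar := fun θ h =>
    h.norm_eq_of_isMaxOn (antitone_stdGaussianCDF_neg_div hσ.le) (isMaxOn_iff.mpr hεmax)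
      (fun ε hε hmax => hεuniq ε hε (isMaxOn_iff.mp hmax)) hmem.2
      (hconv.zero_mem_of_neg_mem hsym hθ₀)
  refine ⟨norm_eq θ₀ h₀, norm_eq θ₁ h₁, ?_⟩
  by_contra hne
  have hlt := (norm_midpoint_lt_iff ((norm_eq θ₀ h₀).trans (norm_eq θ₁ h₁).symm)).mpr hne
  rw [← map_add, ← map_smul, norm_eq θ₀ h₀] at hlt
  exact hlt.ne (norm_eq _ (h₀.half_add hconv h₁))

/-- If `Θ` is convex and centrosymmetric, `ε*` is the unique nonzero maximizer of
`ε ↦ ω(ε)Φ(−ε/σ)` over `[0, a*σ]`, and `θ₀, θ₁ ∈ Θ` both attain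
`sup{L(θ) : ‖m(θ)‖ ≤ ε*, θ ∈ Θ}`, then `‖m(θ₀)‖ = ‖m(θ₁)‖ = ε*` and `m(θ₀) = m(θ₁)`. -/
theorem modulus_maximizer_norm_and_m_unique
    {V : Type*} [AddCommGroup V] [Module ℝ V] (n : ℕ) (σ astar εstar : ℝ) (hσ : 0 < σ)
    (hastar0 : 0 ≤ astar)
    (hamax : ∀ a, 0 ≤ a → a * stdGaussianCDF (-a) ≤ astar * stdGaussianCDF (-astar))
    (hauniq : ∀ a, 0 ≤ a →
      (∀ b, 0 ≤ b → b * stdGaussianCDF (-b) ≤ a * stdGaussianCDF (-a)) → a = astar)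
    (L : V →ₗ[ℝ] ℝ) (m : V →ₗ[ℝ] EuclideanSpace ℝ (Fin n))
    (Θ : Set V) (hconv : Convex ℝ Θ) (hsym : ∀ θ ∈ Θ, -θ ∈ Θ)
    (hmem : εstar ∈ Set.Icc 0 (astar * σ)) (hne : εstar ≠ 0)
    (hεmax : ∀ ε ∈ Set.Icc 0 (astar * σ),
      modulusE L m Θ ε * ((stdGaussianCDF (-(ε / σ)) : ℝ) : EReal) ≤
        modulusE L m Θ εstar * ((stdGaussianCDF (-(εstar / σ)) : ℝ) : EReal))
    (hεuniq : ∀ ε ∈ Set.Icc 0 (astar * σ),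
      (∀ ε' ∈ Set.Icc 0 (astar * σ),
        modulusE L m Θ ε' * ((stdGaussianCDF (-(ε' / σ)) : ℝ) : EReal) ≤
          modulusE L m Θ ε * ((stdGaussianCDF (-(ε / σ)) : ℝ) : EReal)) → ε = εstar)
    (θ₀ θ₁ : V) (hθ₀ : θ₀ ∈ Θ) (hθ₁ : θ₁ ∈ Θ)
    (hn₀ : ‖m θ₀‖ ≤ εstar) (hn₁ : ‖m θ₁‖ ≤ εstar)
    (hatt₀ : ∀ θ ∈ Θ, ‖m θ‖ ≤ εstar → L θ ≤ L θ₀)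
    (hatt₁ : ∀ θ ∈ Θ, ‖m θ‖ ≤ εstar → L θ ≤ L θ₁) :
    ‖m θ₀‖ = εstar ∧ ‖m θ₁‖ = εstar ∧ m θ₀ = m θ₁ :=
  modulus_maximizer_norm_and_m_unique_general n σ astar εstar hσ L m Θ hconv hsym hmem hεmax hεuniq
    θ₀ θ₁ hθ₀ hθ₁ hn₀ hn₁ hatt₀ hatt₁
end
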